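/- arXiv:math/0509292 — 5 statements merged into one kernel-verified Lean document; each statement's English description precedes it below -/
import Mathlib

section
/- For every natural number n, the number of pairs (x,y) of integers with 0 ≤ x ≤ y, x ≡ y (mod 3), and x+y = n equals ⌊(n+2)/2⌋ - ⌊(n+2)/3⌋. -/
theorem count_orbit_pairs (n : ℕ) :
    Set.ncard {p : ℤ × ℤ | 0 ≤ p.1 ∧ p.1 ≤ p.2 ∧ p.1 ≡ p.2 [ZMOD 3] ∧ p.1 + p.2 = n} =
      (n + 2) / 2 - (n + 2) / 3 := by
  have hset : {p : ℤ × ℤ | 0 ≤ p.1 ∧ p.1 ≤ p.2 ∧ p.1 ≡ p.2 [ZMOD 3] ∧ p.1 + p.2 = n} =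
      (fun x : ℤ => (x, (n : ℤ) - x)) ''
        ↑((Finset.range ((n + 2) / 2 - (n + 2) / 3)).image
          (fun i : ℕ => 2 * (n : ℤ) % 3 + 3 * (i : ℤ))) := by
    ext ⟨a, b⟩
    simp only [Set.mem_setOf_eq, Set.mem_image, Finset.coe_image, Finset.coe_range,
      Set.mem_image, Set.mem_Iio, Prod.mk.injEq]
    obtain ⟨q, r, hr, rfl⟩ : ∃ q r, r < 6 ∧ n = 6 * q + r := ⟨n / 6, n % 6, by omega, by omega⟩
    constructor
    · rintro ⟨h1, h2, h3, h4⟩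
      have h3' : a % 3 = b % 3 := h3
      refine ⟨a, ⟨((a - 2 * ((6 * q + r : ℕ) : ℤ) % 3) / 3).toNat, ?_, ?_⟩, rfl, by omega⟩ <;>
        (interval_cases r <;> omega)
    · rintro ⟨x, ⟨i, hi, rfl⟩, rfl, rfl⟩
      refine ⟨?_, ?_, ?_, by ring⟩
      · interval_cases r <;> omega
      · interval_cases r <;> omega
      · show _ % 3 = _ % 3
        interval_cases r <;> omega
  rw [hset, Set.ncard_image_of_injective _ (fun a b h => by simpa using congrArg Prod.fst h),
    Set.ncard_coe_finset,
    Finset.card_image_of_injective _ (fun a b h => by simpa using h),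
    Finset.card_range]
end

section
/- Let P(n) = Σ_{d|n} μ(d)·(⌊(n/d+2)/2⌋ - ⌊(n/d+2)/3⌋). Then P(n) = 0 if and only if n ∈ {1, 4, 6, 10}. -/
/-- The number of primitive classes of period `2n` orbits. -/
def PrimCount (n : ℕ) : ℤ :=
  ∑ d ∈ n.divisors,
    ArithmeticFunction.moebius d * (((n / d + 2) / 2 : ℕ) - ((n / d + 2) / 3 : ℕ))

/-- The set of `b` with `n ≤ 3b` and `2b ≤ n`. -/
def Abil (n : ℕ) : Finset ℕ := Finset.Icc ((n + 2) / 3) (n / 2)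

/-- The primitive part of `Abil`. -/
def Bbil (n : ℕ) : Finset ℕ := (Abil n).filter (fun b => Nat.gcd n b = 1)

lemma mem_Abil {n b : ℕ} : b ∈ Abil n ↔ n ≤ 3 * b ∧ 2 * b ≤ n := by
  simp only [Abil, Finset.mem_Icc]
  omega

lemma mem_Bbil {n b : ℕ} : b ∈ Bbil n ↔ (n ≤ 3 * b ∧ 2 * b ≤ n) ∧ Nat.gcd n b = 1 := by
  simp [Bbil, mem_Abil]

lemma card_Abil (n : ℕ) : (Abil n).card = (n + 2) / 2 - (n + 2) / 3 := by
  rw [Abil, Nat.card_Icc]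
  omega

lemma Abil_eq_biUnion {n : ℕ} (hn : 0 < n) :
    Abil n = n.divisors.biUnion (fun d => (Bbil d).image (fun b => b * (n / d))) := by
  ext b
  simp only [Finset.mem_biUnion, Finset.mem_image, Nat.mem_divisors, mem_Abil, mem_Bbil]
  constructor
  · rintro ⟨h3, h2⟩
    have hb : 0 < b := by omega
    have hg : 0 < Nat.gcd n b := Nat.gcd_pos_of_pos_right n hb
    have hgn : Nat.gcd n b ∣ n := Nat.gcd_dvd_left n b
    have hgb : Nat.gcd n b ∣ b := Nat.gcd_dvd_right n b
    refine ⟨n / Nat.gcd n b, ⟨Nat.div_dvd_of_dvd hgn, hn.ne'⟩, b / Nat.gcd n b,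
      ⟨⟨?_, ?_⟩, Nat.coprime_div_gcd_div_gcd hg⟩, ?_⟩
    · have h1 : n / Nat.gcd n b * Nat.gcd n b = n := Nat.div_mul_cancel hgn
      have h2' : b / Nat.gcd n b * Nat.gcd n b = b := Nat.div_mul_cancel hgb
      have := h3
      nlinarith [h1, h2', hg]
    · have h1 : n / Nat.gcd n b * Nat.gcd n b = n := Nat.div_mul_cancel hgn
      have h2' : b / Nat.gcd n b * Nat.gcd n b = b := Nat.div_mul_cancel hgb
      nlinarith [h1, h2', hg]
    · rw [Nat.div_div_self hgn hn.ne']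
      exact Nat.div_mul_cancel hgb
  · rintro ⟨d, ⟨hdn, -⟩, b', ⟨⟨h3, h2⟩, -⟩, rfl⟩
    have hd : 0 < d := Nat.pos_of_dvd_of_pos hdn hn
    have he : 0 < n / d := Nat.div_pos (Nat.le_of_dvd hn hdn) hd
    have hne : d * (n / d) = n := Nat.mul_div_cancel' hdn
    constructor
    · nlinarith
    · nlinarith

lemma gcd_scaled {n d b' : ℕ} (hn : 0 < n) (hdn : d ∣ n) (hcop : Nat.gcd d b' = 1) :
    Nat.gcd n (b' * (n / d)) = n / d := by
  obtain ⟨e, rfl⟩ := hdn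
  rcases Nat.eq_zero_or_pos d with rfl | hd
  · simp at hn
  rw [Nat.mul_div_cancel_left e hd, Nat.gcd_mul_right, hcop, one_mul]

lemma card_Abil_eq_sum {n : ℕ} (hn : 0 < n) :
    (Abil n).card = ∑ d ∈ n.divisors, (Bbil d).card := by
  rw [Abil_eq_biUnion hn, Finset.card_biUnion]
  · refine Finset.sum_congr rfl fun d hd => ?_
    obtain ⟨hdn, -⟩ := Nat.mem_divisors.mp hd
    have he : 0 < n / d := Nat.div_pos (Nat.le_of_dvd hn hdn)
      (Nat.pos_of_dvd_of_pos hdn hn)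
    exact Finset.card_image_of_injective _ (fun x y h => by
      exact Nat.eq_of_mul_eq_mul_right he h)
  · intro d1 h1 d2 h2 hne
    obtain ⟨hd1, -⟩ := Nat.mem_divisors.mp h1
    obtain ⟨hd2, -⟩ := Nat.mem_divisors.mp h2
    simp only [Finset.disjoint_left, Finset.mem_image]
    rintro b ⟨b1, hb1, rfl⟩ ⟨b2, hb2, heq⟩
    obtain ⟨-, hc1⟩ := mem_Bbil.mp hb1
    obtain ⟨-, hc2⟩ := mem_Bbil.mp hb2
    have e1 : Nat.gcd n (b1 * (n / d1)) = n / d1 := gcd_scaled hn hd1 hc1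
    have e2 : Nat.gcd n (b2 * (n / d2)) = n / d2 := gcd_scaled hn hd2 hc2
    rw [heq] at e2
    have : n / d1 = n / d2 := by rw [← e1, ← e2]
    apply hne
    rw [← Nat.div_div_self hd1 hn.ne', ← Nat.div_div_self hd2 hn.ne', this]

lemma card_Abil_int (m : ℕ) :
    ((Abil m).card : ℤ) = (((m + 2) / 2 : ℕ) : ℤ) - (((m + 2) / 3 : ℕ) : ℤ) := by
  rw [card_Abil]
  omega

lemma prim_eq_card (n : ℕ) (hn : 0 < n) : PrimCount n = ((Bbil n).card : ℤ) := by
  have key := (ArithmeticFunction.sum_eq_iff_sum_mul_moebius_eq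
    (R := ℤ) (f := fun d => ((Bbil d).card : ℤ)) (g := fun m => ((Abil m).card : ℤ))).mp
    (fun m hm => by exact_mod_cast (card_Abil_eq_sum hm).symm) n hn
  simp only [Int.cast_id] at key
  rw [Nat.sum_divisorsAntidiagonal
    (f := fun d e => ((ArithmeticFunction.moebius d : ℤ) : ℤ) * ((Abil e).card : ℤ))] at key
  rw [← key]
  unfold PrimCount
  refine Finset.sum_congr rfl fun d _ => ?_
  rw [card_Abil_int]

theorem prim_zero_iff (n : ℕ) (hn : 1 ≤ n) :
    PrimCount n = 0 ↔ n = 1 ∨ n = 4 ∨ n = 6 ∨ n = 10 := by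
  rw [prim_eq_card n hn]
  constructor
  · intro h
    by_contra hc
    push_neg at hc
    obtain ⟨h1, h4, h6, h10⟩ := hc
    have hne : (Bbil n).Nonempty := by
      rcases Nat.even_or_odd n with he | ho
      · rcases he with ⟨m, hm⟩
        by_cases h2 : n = 2
        · subst h2
          exact ⟨1, mem_Bbil.mpr ⟨⟨by norm_num, by norm_num⟩, by norm_num⟩⟩
        rcases Nat.even_or_odd m with hme | hmo
        · -- n ≡ 0 mod 4, n ≥ 8, b = n/2 - 1
          refine ⟨n / 2 - 1, mem_Bbil.mpr ⟨⟨by omega, by omega⟩, ?_⟩⟩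
          set b := n / 2 - 1 with hb
          have hdn := Nat.gcd_dvd_left n b
          have hdb := Nat.gcd_dvd_right n b
          have h2d : Nat.gcd n b ∣ 2 := by
            have h2b : Nat.gcd n b ∣ 2 * b := hdb.mul_left 2
            have := Nat.dvd_sub hdn h2b
            rwa [show n - 2 * b = 2 by omega] at this
          have hpos : 0 < Nat.gcd n b := Nat.pos_of_dvd_of_pos h2d (by norm_num)
          have hle : Nat.gcd n b ≤ 2 := Nat.le_of_dvd (by norm_num) h2d
          have hcase : Nat.gcd n b = 1 ∨ Nat.gcd n b = 2 := by omega
          rcases hcase with h | h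
          · exact h
          · rw [h] at hdb; obtain ⟨e, he2⟩ := hme; omega
        · -- n ≡ 2 mod 4, n ≥ 14, b = n/2 - 2
          refine ⟨n / 2 - 2, mem_Bbil.mpr ⟨⟨?_, by omega⟩, ?_⟩⟩
          · obtain ⟨e, he2⟩ := hmo; omega
          set b := n / 2 - 2 with hb
          have hdn := Nat.gcd_dvd_left n b
          have hdb := Nat.gcd_dvd_right n b
          have h4d : Nat.gcd n b ∣ 4 := by
            have h2b : Nat.gcd n b ∣ 2 * b := hdb.mul_left 2
            have := Nat.dvd_sub hdn h2b
            rwa [show n - 2 * b = 4 by omega] at this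
          have hpos : 0 < Nat.gcd n b := Nat.pos_of_dvd_of_pos h4d (by norm_num)
          have hle : Nat.gcd n b ≤ 4 := Nat.le_of_dvd (by norm_num) h4d
          obtain ⟨e, he2⟩ := hmo
          have hcase : Nat.gcd n b = 1 ∨ Nat.gcd n b = 2 ∨ Nat.gcd n b = 3 ∨
              Nat.gcd n b = 4 := by omega
          rcases hcase with h | h | h | h
          · exact h
          · rw [h] at hdb; omega
          · rw [h] at h4d; omega
          · rw [h] at hdb; omega
      · -- n odd, n ≥ 3, b = n / 2
        obtain ⟨m, hm⟩ := ho
        refine ⟨n / 2, mem_Bbil.mpr ⟨⟨by omega, by omega⟩, ?_⟩⟩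
        have hdn := Nat.gcd_dvd_left n (n / 2)
        have hdb := Nat.gcd_dvd_right n (n / 2)
        have h1d : Nat.gcd n (n / 2) ∣ 1 := by
          have h2b : Nat.gcd n (n / 2) ∣ 2 * (n / 2) := hdb.mul_left 2
          have := Nat.dvd_sub hdn h2b
          rwa [show n - 2 * (n / 2) = 1 by omega] at this
        exact Nat.dvd_one.mp h1d
    have := Finset.card_pos.mpr hne
    omega
  · rintro (rfl | rfl | rfl | rfl) <;> decide
end

section
/- Call a pair (x,y) of nonnegative integers with x ≤ y and x ≡ y (mod 3) 'primitive' if the largest d ∈ ℕ such that d divides x, d divides y, and x/d ≡ y/d (mod 3) is d = 1. Then (x,y) is primitive if and only if either gcd(x,y) = 1, or there exist nonnegative integers a,b with (x,y) = (3a,3b), gcd(a,b) = 1, and a ≢ b (mod 3). -/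
/-- `(x, y)` is primitive: the only positive `d` dividing both `x` and `y`
with `x/d ≡ y/d (mod 3)` is `d = 1`. -/
def PrimitivePair (x y : ℕ) : Prop :=
  ∀ d : ℕ, 0 < d → d ∣ x → d ∣ y → x / d % 3 = y / d % 3 → d = 1

theorem primitive_check (x y : ℕ) (hxy : x ≤ y) (hmod : x % 3 = y % 3)
    (hne : (x, y) ≠ (0, 0)) :
    PrimitivePair x y ↔
      Nat.gcd x y = 1 ∨
        ∃ a b : ℕ, x = 3 * a ∧ y = 3 * b ∧ Nat.gcd a b = 1 ∧ a % 3 ≠ b % 3 := by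
  have hg0 : 0 < Nat.gcd x y := by
    rcases Nat.eq_zero_or_pos (Nat.gcd x y) with h | h
    · exfalso
      have hx0 := Nat.eq_zero_of_gcd_eq_zero_left h
      have hy0 := Nat.eq_zero_of_gcd_eq_zero_right h
      exact hne (by simp [hx0, hy0])
    · exact h
  have hcopq : Nat.Coprime (x / Nat.gcd x y) (y / Nat.gcd x y) :=
    Nat.coprime_div_gcd_div_gcd hg0
  set g := Nat.gcd x y with hgdef
  have hgx : g ∣ x := Nat.gcd_dvd_left x y
  have hgy : g ∣ y := Nat.gcd_dvd_right x y
  have hgdvd : ∀ d : ℕ, d ∣ x → d ∣ y → d ∣ g := fun d hx hy => Nat.dvd_gcd hx hy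
  clear_value g
  constructor
  · intro hp
    by_cases h3 : x / g % 3 = y / g % 3
    · exact Or.inl (hgdef ▸ hp g hg0 hgx hgy h3)
    · have h3g : (3 : ℕ) ∣ g := by
        by_contra h3g
        have hcop : Nat.Coprime 3 g := (Nat.prime_three.coprime_iff_not_dvd).mpr h3g
        have hu : IsUnit (g : ZMod 3) := (ZMod.isUnit_iff_coprime g 3).mpr hcop.symm
        have hx : (g : ZMod 3) * ((x / g : ℕ) : ZMod 3) = (x : ZMod 3) := by
          rw [← Nat.cast_mul, Nat.mul_div_cancel' hgx]
        have hy : (g : ZMod 3) * ((y / g : ℕ) : ZMod 3) = (y : ZMod 3) := by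
          rw [← Nat.cast_mul, Nat.mul_div_cancel' hgy]
        have hxy3 : (x : ZMod 3) = (y : ZMod 3) :=
          (ZMod.natCast_eq_natCast_iff' x y 3).mpr hmod
        have : ((x / g : ℕ) : ZMod 3) = ((y / g : ℕ) : ZMod 3) := by
          apply hu.mul_left_cancel
          rw [hx, hy, hxy3]
        exact h3 ((ZMod.natCast_eq_natCast_iff' _ _ 3).mp this)
      obtain ⟨e, he⟩ := h3g
      have he0 : 0 < e := by omega
      have hex : e ∣ x := dvd_trans ⟨3, by rw [he]; ring⟩ hgx
      have hey : e ∣ y := dvd_trans ⟨3, by rw [he]; ring⟩ hgy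
      have hxe : x / e = 3 * (x / g) := by
        obtain ⟨m, hm⟩ := hgx
        have hxg : x / g = m := by rw [hm, Nat.mul_div_cancel_left _ hg0]
        rw [hxg, hm, he]
        rw [show 3 * e * m = e * (3 * m) by ring, Nat.mul_div_cancel_left _ he0]
      have hye : y / e = 3 * (y / g) := by
        obtain ⟨m, hm⟩ := hgy
        have hyg : y / g = m := by rw [hm, Nat.mul_div_cancel_left _ hg0]
        rw [hyg, hm, he]
        rw [show 3 * e * m = e * (3 * m) by ring, Nat.mul_div_cancel_left _ he0]
      have he1 : e = 1 := hp e he0 hex hey (by rw [hxe, hye]; simp [Nat.mul_mod_right])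
      have hg3 : g = 3 := by rw [he, he1]
      refine Or.inr ⟨x / 3, y / 3, ?_, ?_, ?_, ?_⟩
      · rw [Nat.mul_div_cancel' (hg3 ▸ hgx)]
      · rw [Nat.mul_div_cancel' (hg3 ▸ hgy)]
      · rwa [hg3] at hcopq
      · rwa [hg3] at h3
  · rintro (h1 | ⟨a, b, hx, hy, hab, hne3⟩) d hd hdx hdy hmod3
    · exact Nat.dvd_one.mp (h1 ▸ hgdvd d hdx hdy)
    · by_cases h3d : (3 : ℕ) ∣ d
      · obtain ⟨e, he⟩ := h3d
        exfalso
        have hea : e ∣ a := by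
          have : 3 * e ∣ 3 * a := he ▸ hx ▸ hdx
          exact (Nat.mul_dvd_mul_iff_left (by norm_num : 0 < 3)).mp this
        have heb : e ∣ b := by
          have : 3 * e ∣ 3 * b := he ▸ hy ▸ hdy
          exact (Nat.mul_dvd_mul_iff_left (by norm_num : 0 < 3)).mp this
        have he1 : e = 1 := Nat.dvd_one.mp (hab ▸ Nat.dvd_gcd hea heb)
        have hd3 : d = 3 := by rw [he, he1]
        apply hne3
        have hxa : x / d = a := by rw [hd3, hx, Nat.mul_div_cancel_left _ (by norm_num : 0 < 3)]
        have hyb : y / d = b := by rw [hd3, hy, Nat.mul_div_cancel_left _ (by norm_num : 0 < 3)]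
        rwa [hxa, hyb] at hmod3
      · have hcop : Nat.Coprime d 3 := ((Nat.prime_three.coprime_iff_not_dvd).mpr h3d).symm
        have hda : d ∣ a := hcop.dvd_of_dvd_mul_left (hx ▸ hdx)
        have hdb : d ∣ b := hcop.dvd_of_dvd_mul_left (hy ▸ hdy)
        exact Nat.dvd_one.mp (hab ▸ Nat.dvd_gcd hda hdb)
end

section
/- For every k ≥ 1, the pair (2k-1, 2k+5) is primitive: (2k-1) ≡ (2k+5) (mod 3), their sum is 4k+4, and the only positive integer d dividing both 2k-1 and 2k+5 with (2k-1)/d ≡ (2k+5)/d (mod 3) is d = 1. -/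
theorem primitive_family_4k4 (k : ℕ) (hk : 1 ≤ k) :
    (2 * k - 1) % 3 = (2 * k + 5) % 3 ∧ (2 * k - 1) + (2 * k + 5) = 4 * k + 4 ∧
      ∀ d : ℕ, 0 < d → d ∣ (2 * k - 1) → d ∣ (2 * k + 5) →
        (2 * k - 1) / d % 3 = (2 * k + 5) / d % 3 → d = 1 := by
  obtain ⟨m, rfl⟩ := Nat.exists_eq_add_of_le hk
  refine ⟨by omega, by omega, ?_⟩
  intro d hd h1 h2 h3
  obtain ⟨c, hc⟩ := h1
  obtain ⟨e, he⟩ := h2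
  rw [hc, he, Nat.mul_div_cancel_left _ hd, Nat.mul_div_cancel_left _ hd] at h3
  have hd6 : d ≤ 6 := by
    have h := Nat.dvd_sub ⟨e, he⟩ ⟨c, hc⟩
    have heq : 2 * (1 + m) + 5 - (2 * (1 + m) - 1) = 6 := by omega
    rw [heq] at h
    exact Nat.le_of_dvd (by norm_num) h
  interval_cases d <;> omega
end

section
/- For every k ≥ 1, the pair (2k-1, 2k+11) is primitive: (2k-1) ≡ (2k+11) (mod 3), their sum is 4k+10, and the only positive integer d dividing both 2k-1 and 2k+11 with (2k-1)/d ≡ (2k+11)/d (mod 3) is d = 1. -/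
theorem primitive_family_4k10 (k : ℕ) (hk : 1 ≤ k) :
    (2 * k - 1) % 3 = (2 * k + 11) % 3 ∧ (2 * k - 1) + (2 * k + 11) = 4 * k + 10 ∧
      ∀ d : ℕ, 0 < d → d ∣ (2 * k - 1) → d ∣ (2 * k + 11) →
        (2 * k - 1) / d % 3 = (2 * k + 11) / d % 3 → d = 1 := by
  refine ⟨by omega, by omega, ?_⟩
  intro d hd hd1 hd2 heq
  obtain ⟨m, hm⟩ := hd1
  have hd12 : d ∣ 12 := by
    have h12 : 12 = (2 * k + 11) - (2 * k - 1) := by omega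
    rw [h12]; exact Nat.dvd_sub hd2 ⟨m, hm⟩
  have hodd : d % 2 = 1 := by
    rcases Nat.even_or_odd d with h | h
    · exfalso
      have h2 : 2 ∣ 2 * k - 1 := dvd_trans h.two_dvd ⟨m, hm⟩
      omega
    · obtain ⟨t, ht⟩ := h; omega
  have hle : d ≤ 12 := Nat.le_of_dvd (by norm_num) hd12
  interval_cases d
  · rfl
  · omega
  · exfalso
    have h2 : 2 * k + 11 = 3 * (m + 4) := by omega
    rw [hm, h2, Nat.mul_div_cancel_left _ (by norm_num : 0 < 3),
      Nat.mul_div_cancel_left _ (by norm_num : 0 < 3)] at heq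
    omega
  all_goals omega
end
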